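/- Let T be a triangulated category with coproducts and G a compact generator with Hom(G, G[i]) = 0 for all i ≥ 2. Let S be the class of objects F such that there exists a distinguished triangle E → F → D with E ∈ C⁰ (the smallest full subcategory containing G, closed under finite extensions, coproducts, and summands) and Hom(G[j], D) = 0 for all j ≥ -1. Then S is closed under extensions: if F₂[-1] → F₁ → F is a distinguished triangle with F₁, F₂ ∈ S, then F ∈ S. -/

import Mathlib

/-!
Write `E₁ → F₁ → D₁` and `E₂ → F₂ → D₂` for the given approximations. Since `E₂⟦-1⟧ ∈ C⁰` has
no maps to `D₁`, the map `E₂⟦-1⟧ → F₂⟦-1⟧ → F₁` lifts to `w : E₂⟦-1⟧ → E₁`; its cone `E` is an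
extension of `E₂` by `E₁`, hence in `C⁰`, and comes with a morphism of triangles to
`F₂⟦-1⟧ → F₁ → F` whose third component `c : E → F` we take as the approximation of `F`.

For a test object `P`, `Hom(P, cone u) = 0` means that `Hom(P, -)` turns `u` into a surjection
and `u⟦1⟧` into an injection. After rotating, both properties pass from the outer components
`E₁ → F₁` and `E₂⟦-1⟧⟦1⟧ → F₂⟦-1⟧⟦1⟧` to `c` by the two four lemmas for the long exact
`Hom(P, -)` sequences, so no 3×3 completion of the diagram is needed.
-/

open CategoryTheory CategoryTheory.Limits CategoryTheory.Pretriangulated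

universe w v u

section Compact

variable {T : Type u} [Category.{v} T] [Preadditive T]

/-- The canonical comparison map `⨁ᵢ Hom(C, Xᵢ) →+ Hom(C, ∐ᵢ Xᵢ)`. -/
noncomputable def compactComparison (C : T) {ι : Type w} [DecidableEq ι] (X : ι → T)
    [HasCoproduct X] : (DirectSum ι fun i => (C ⟶ X i)) →+ (C ⟶ ∐ X) :=
  DirectSum.toAddMonoid fun i => Preadditive.rightComp C (Sigma.ι X i)

/-- An object `C` is compact if for every small family `X` whose coproduct exists, the canonical
map `⨁ᵢ Hom(C, Xᵢ) → Hom(C, ∐ᵢ Xᵢ)` is an isomorphism (i.e. bijective). -/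
def IsCompactObject (C : T) : Prop :=
  ∀ (ι : Type w) [DecidableEq ι] (X : ι → T) [HasCoproduct X],
    Function.Bijective (compactComparison C X)

end Compact

variable {T : Type u} [Category.{v} T] [Preadditive T] [HasZeroObject T] [HasShift T ℤ]
  [∀ n : ℤ, (shiftFunctor T n).Additive] [Pretriangulated T]
variable [HasCoproducts.{v} T] [HasBinaryBiproducts T]

/-- `C⁰ = Smr(Coprod(G[0,0]))`: the smallest strictly full subcategory containing `G`, closed
under extensions, small coproducts and direct summands. -/
def coprodZero (G : T) : Set T :=
  ⋂₀ {S : Set T |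
    G ∈ S ∧
    (∀ X Y : T, X ∈ S → (X ≅ Y) → Y ∈ S) ∧
    (∀ Tr : Triangle T, Tr ∈ (distTriang T) → Tr.obj₁ ∈ S → Tr.obj₃ ∈ S → Tr.obj₂ ∈ S) ∧
    (∀ (ι : Type v) (X : ι → T), (∀ i, X i ∈ S) → (∐ X) ∈ S) ∧
    (∀ X Y : T, (X ⊞ Y) ∈ S → X ∈ S)}

/-- The class `S` of objects `F` admitting a distinguished triangle `E ⟶ F ⟶ D` with
`E ∈ C⁰` and `Hom(G[j], D) = 0` for all `j ≥ -1`. -/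
def approxClass (G : T) : Set T :=
  {F : T | ∃ (E D : T) (f : E ⟶ F) (g : F ⟶ D) (h : D ⟶ E⟦(1 : ℤ)⟧),
    Triangle.mk f g h ∈ (distTriang T) ∧ E ∈ coprodZero G ∧
    (∀ j : ℤ, -1 ≤ j → ∀ φ : G⟦j⟧ ⟶ D, φ = 0)}

section HomSurjShiftInj

variable {C : Type*} [Category C] [Preadditive C] [HasShift C ℤ]

def HomSurjShiftInj (P : C) {X Y : C} (u : X ⟶ Y) : Prop :=
  Function.Surjective (Preadditive.rightComp P u) ∧
    Function.Injective (Preadditive.rightComp P (u⟦(1 : ℤ)⟧'))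

variable {P : C}

lemma HomSurjShiftInj.iso_comp_comp {X Y X' Y' : C} {u : X ⟶ Y} (h : HomSurjShiftInj P u)
    (eX : X' ≅ X) (eY : Y ≅ Y') : HomSurjShiftInj P (eX.hom ≫ u ≫ eY.hom) := by
  refine ⟨fun y => ?_, (injective_iff_map_eq_zero _).mpr fun x hx => ?_⟩
  · obtain ⟨x, hx : x ≫ u = y ≫ eY.inv⟩ := h.1 (y ≫ eY.inv)
    exact ⟨x ≫ eX.inv, by simp [Preadditive.rightComp, reassoc_of% hx]⟩
  · have hx' : (x ≫ eX.hom⟦(1 : ℤ)⟧') ≫ u⟦(1 : ℤ)⟧' = 0 := by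
      rw [← cancel_mono (eY.hom⟦(1 : ℤ)⟧'), zero_comp]
      simpa [Preadditive.rightComp] using hx
    simpa using (injective_iff_map_eq_zero _).mp h.2 _ hx'

lemma HomSurjShiftInj.shift_neg_shift {X Y : C} {u : X ⟶ Y} (h : HomSurjShiftInj P u)
    (n : ℤ) : HomSurjShiftInj P (u⟦-n⟧'⟦n⟧') := by
  rw [shift_neg_shift']
  exact h.iso_comp_comp ((shiftFunctorCompIsoId C (-n) n _).app X)
    ((shiftFunctorCompIsoId C (-n) n _).app Y).symm

end HomSurjShiftInj

section Pretriangulated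

variable {C : Type*} [Category C] [Preadditive C] [HasZeroObject C] [HasShift C ℤ]
  [∀ n : ℤ, (shiftFunctor C n).Additive] [Pretriangulated C]

variable {P : C} {T₁ T₂ : Triangle C}

lemma homSurjShiftInj_iff {K : Triangle C} (hK : K ∈ distTriang C) :
    HomSurjShiftInj P K.mor₁ ↔ ∀ φ : P ⟶ K.obj₃, φ = 0 := by
  constructor
  · rintro ⟨hsurj, hinj⟩ φ
    have hφ : φ ≫ K.mor₃ = 0 := (injective_iff_map_eq_zero _).mp hinj _
      (by simp [Preadditive.rightComp, comp_distTriang_mor_zero₃₁ _ hK])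
    obtain ⟨y, rfl⟩ := Triangle.coyoneda_exact₃ _ hK φ hφ
    obtain ⟨x, rfl⟩ := hsurj y
    simp [Preadditive.rightComp, comp_distTriang_mor_zero₁₂ _ hK]
  · intro h
    refine ⟨fun y => ?_, (injective_iff_map_eq_zero _).mpr fun x hx => ?_⟩
    · obtain ⟨x, hx⟩ := Triangle.coyoneda_exact₂ _ hK y (h _)
      exact ⟨x, hx.symm⟩
    · obtain ⟨z, rfl⟩ := Triangle.coyoneda_exact₁ _ hK x hx
      rw [h z, zero_comp]

lemma surjective_rightComp_hom₂ (hT₁ : T₁ ∈ distTriang C) (hT₂ : T₂ ∈ distTriang C)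
    (φ : T₁ ⟶ T₂) (h₁ : Function.Surjective (Preadditive.rightComp P φ.hom₁))
    (h₃ : Function.Surjective (Preadditive.rightComp P φ.hom₃))
    (h₄ : Function.Injective (Preadditive.rightComp P (φ.hom₁⟦(1 : ℤ)⟧'))) :
    Function.Surjective (Preadditive.rightComp P φ.hom₂) := by
  intro y
  obtain ⟨z, hz : z ≫ φ.hom₃ = y ≫ T₂.mor₂⟩ := h₃ (y ≫ T₂.mor₂)
  have hz₃ : z ≫ T₁.mor₃ = 0 := (injective_iff_map_eq_zero _).mp h₄ _ <| by
    change (z ≫ T₁.mor₃) ≫ φ.hom₁⟦1⟧' = 0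
    rw [Category.assoc, φ.comm₃, reassoc_of% hz, comp_distTriang_mor_zero₂₃ _ hT₂, comp_zero]
  obtain ⟨x, rfl⟩ := Triangle.coyoneda_exact₃ _ hT₁ z hz₃
  have hdiff : (y - x ≫ φ.hom₂) ≫ T₂.mor₂ = 0 := by
    rw [Preadditive.sub_comp, Category.assoc, ← φ.comm₂, ← hz, Category.assoc, sub_self]
  obtain ⟨s, hs⟩ := Triangle.coyoneda_exact₂ _ hT₂ _ hdiff
  obtain ⟨r, rfl : r ≫ φ.hom₁ = s⟩ := h₁ s
  refine ⟨x + r ≫ T₁.mor₁, ?_⟩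
  change (x + r ≫ T₁.mor₁) ≫ φ.hom₂ = y
  rw [Preadditive.add_comp, Category.assoc, φ.comm₁, ← Category.assoc, ← hs, add_sub_cancel]

lemma injective_rightComp_hom₃ (hT₁ : T₁ ∈ distTriang C) (hT₂ : T₂ ∈ distTriang C)
    (φ : T₁ ⟶ T₂) (h₁ : Function.Surjective (Preadditive.rightComp P φ.hom₁))
    (h₂ : Function.Injective (Preadditive.rightComp P φ.hom₂))
    (h₄ : Function.Injective (Preadditive.rightComp P (φ.hom₁⟦(1 : ℤ)⟧'))) :
    Function.Injective (Preadditive.rightComp P φ.hom₃) := by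
  rw [injective_iff_map_eq_zero]
  intro z (hz : z ≫ φ.hom₃ = 0)
  have hz₃ : z ≫ T₁.mor₃ = 0 := (injective_iff_map_eq_zero _).mp h₄ _ <| by
    change (z ≫ T₁.mor₃) ≫ φ.hom₁⟦1⟧' = 0
    rw [Category.assoc, φ.comm₃, reassoc_of% hz, zero_comp]
  obtain ⟨y, rfl⟩ := Triangle.coyoneda_exact₃ _ hT₁ z hz₃
  have hy : (y ≫ φ.hom₂) ≫ T₂.mor₂ = 0 := by
    rw [Category.assoc, ← φ.comm₂, ← Category.assoc, hz]
  obtain ⟨s, hs⟩ := Triangle.coyoneda_exact₂ _ hT₂ _ hy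
  obtain ⟨r, rfl : r ≫ φ.hom₁ = s⟩ := h₁ s
  have hyr : y = r ≫ T₁.mor₁ := h₂ <| by
    change y ≫ φ.hom₂ = (r ≫ T₁.mor₁) ≫ φ.hom₂
    rw [hs, Category.assoc, Category.assoc, φ.comm₁]
  rw [hyr, Category.assoc, comp_distTriang_mor_zero₁₂ _ hT₁, comp_zero]

lemma HomSurjShiftInj.hom₂ (hT₁ : T₁ ∈ distTriang C) (hT₂ : T₂ ∈ distTriang C)
    (φ : T₁ ⟶ T₂) (h₁ : HomSurjShiftInj P φ.hom₁) (h₃ : HomSurjShiftInj P φ.hom₃) :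
    HomSurjShiftInj P φ.hom₂ :=
  -- the twice rotated morphism has components `φ.hom₃`, `φ.hom₁⟦1⟧'`, `φ.hom₂⟦1⟧'`
  ⟨surjective_rightComp_hom₂ hT₁ hT₂ φ h₁.1 h₃.1 h₁.2,
    injective_rightComp_hom₃ (rot_of_distTriang _ (rot_of_distTriang _ hT₁))
      (rot_of_distTriang _ (rot_of_distTriang _ hT₂)) ((rotate C).map ((rotate C).map φ))
      h₃.1 h₁.2 h₃.2⟩

end Pretriangulated

lemma mem_coprodZero_of_iso {G X Y : T} (hX : X ∈ coprodZero G) (e : X ≅ Y) :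
    Y ∈ coprodZero G :=
  fun S hS => hS.2.1 X Y (hX S hS) e

lemma mem_coprodZero_of_distTriang {G : T} {K : Triangle T} (hK : K ∈ distTriang T)
    (h₁ : K.obj₁ ∈ coprodZero G) (h₃ : K.obj₃ ∈ coprodZero G) : K.obj₂ ∈ coprodZero G :=
  fun S hS => hS.2.2.1 K hK (h₁ S hS) (h₃ S hS)

lemma shift_hom_eq_zero_of_mem_coprodZero {G D : T} {j : ℤ} (hG : ∀ φ : G⟦j⟧ ⟶ D, φ = 0)
    {X : T} (hX : X ∈ coprodZero G) : ∀ φ : X⟦j⟧ ⟶ D, φ = 0 := by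
  refine hX {Y | ∀ φ : Y⟦j⟧ ⟶ D, φ = 0} ⟨hG, ?_, ?_, ?_, ?_⟩
  · intro Y Z hY e φ
    simpa using (shiftFunctor T j).map e.inv ≫= hY ((shiftFunctor T j).map e.hom ≫ φ)
  · intro K hK h₁ h₃ φ
    obtain ⟨ψ, hψ⟩ := Triangle.yoneda_exact₂ _ (Triangle.shift_distinguished K hK j) φ (h₁ _)
    rw [hψ, show ψ = 0 from h₃ ψ]
    exact comp_zero
  · intro ι Y hY φ
    refine (isColimitOfPreserves (shiftFunctor T j)
      (colimit.isColimit (Discrete.functor Y))).hom_ext fun ⟨i⟩ => ?_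
    rw [comp_zero]
    exact hY i _
  · intro Y Z hYZ φ
    rw [← Category.id_comp φ, ← (shiftFunctor T j).map_id, ← biprod.inl_fst,
      Functor.map_comp_assoc, hYZ ((shiftFunctor T j).map biprod.fst ≫ φ), comp_zero]

theorem stmt13_general (G : T)
    (F F₁ F₂ : T) (f : F₂⟦(-1 : ℤ)⟧ ⟶ F₁) (g : F₁ ⟶ F)
    (h : F ⟶ (F₂⟦(-1 : ℤ)⟧)⟦(1 : ℤ)⟧)
    (hTr : Triangle.mk f g h ∈ (distTriang T))
    (h₁ : F₁ ∈ approxClass G) (h₂ : F₂ ∈ approxClass G) :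
    F ∈ approxClass G := by
  obtain ⟨E₁, D₁, a₁, _, _, hT₁, hE₁, v₁⟩ := h₁
  obtain ⟨E₂, D₂, a₂, _, _, hT₂, hE₂, v₂⟩ := h₂
  obtain ⟨w, hw⟩ := Triangle.coyoneda_exact₂ _ hT₁ (a₂⟦-1⟧' ≫ f)
    (shift_hom_eq_zero_of_mem_coprodZero (v₁ (-1) le_rfl) hE₂ _)
  obtain ⟨E, _, _, hTE⟩ := distinguished_cocone_triangle w
  obtain ⟨c, hc₂, hc₃⟩ := complete_distinguished_triangle_morphism _ _ hTE hTr _ a₁ hw.symm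
  obtain ⟨D, d, e, hTD⟩ := distinguished_cocone_triangle c
  refine ⟨E, D, c, d, e, hTD, ?_, fun j hj => ?_⟩
  · exact mem_coprodZero_of_distTriang (rot_of_distTriang _ hTE) hE₁
      (mem_coprodZero_of_iso hE₂ (shiftNegShift E₂ 1).symm)
  · have ha₁ := (homSurjShiftInj_iff hT₁).mpr (v₁ j hj)
    have ha₂ := (homSurjShiftInj_iff hT₂).mpr (v₂ j hj)
    exact (homSurjShiftInj_iff hTD).mp <| HomSurjShiftInj.hom₂ (rot_of_distTriang _ hTE)
      (rot_of_distTriang _ hTr) ((rotate T).map (Triangle.homMk _ _ _ a₁ c hw.symm hc₂ hc₃))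
      ha₁ (ha₂.shift_neg_shift 1)

/-- If `G` is a compact object with `Hom(G, G[i]) = 0` for `i ≥ 2`, then the class `S` above is
closed under extensions: for any distinguished triangle `F₂[-1] ⟶ F₁ ⟶ F` with `F₁, F₂ ∈ S`,
also `F ∈ S`. -/
theorem stmt13 (G : T) (hG : IsCompactObject.{v} G)
    (hvan : ∀ i : ℤ, 2 ≤ i → ∀ f : G ⟶ G⟦i⟧, f = 0)
    (F F₁ F₂ : T) (f : F₂⟦(-1 : ℤ)⟧ ⟶ F₁) (g : F₁ ⟶ F)
    (h : F ⟶ (F₂⟦(-1 : ℤ)⟧)⟦(1 : ℤ)⟧)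
    (hTr : Triangle.mk f g h ∈ (distTriang T))
    (h₁ : F₁ ∈ approxClass G) (h₂ : F₂ ∈ approxClass G) :
    F ∈ approxClass G :=
  stmt13_general G F F₁ F₂ f g h hTr h₁ h₂
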